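/- Every string [c_1,…,c_n] of type T that is not Du Val satisfies c_1 · c_n ≥ 6. -/

import Mathlib

/-- Hirzebruch–Jung continued fraction value of a list:
`hjValue [a₁, …, a_r] = a₁ - 1/(a₂ - 1/(⋯ - 1/a_r))`.
(For the empty list the value is `0`, and since `1/0 = 0` in `ℚ`,
`hjValue [a] = a`.) -/
def hjValue : List ℤ → ℚ
  | [] => 0
  | a :: l => (a : ℚ) - 1 / hjValue l

/-- A *string* is a nonempty finite sequence of integers, all `≥ 2`. -/
def IsString (l : List ℤ) : Prop := l ≠ [] ∧ ∀ x ∈ l, 2 ≤ x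

/-- Two strings are *conjugate* if their values are `m/q` and `m/(m-q)`
for some coprime integers `m > q ≥ 1`. -/
def IsConjugate (a b : List ℤ) : Prop :=
  ∃ m q : ℕ, 1 ≤ q ∧ q < m ∧ Nat.Coprime m q ∧
    hjValue a = (m : ℚ) / q ∧ hjValue b = (m : ℚ) / ((m : ℚ) - q)

/-- A string is of *type T* if its value, written in lowest terms `n/q` with
coprime `n > q ≥ 1`, satisfies `n ∣ (q+1)²`. -/
def IsTString (l : List ℤ) : Prop :=
  IsString l ∧ ∃ n q : ℕ, 1 ≤ q ∧ q < n ∧ Nat.Coprime n q ∧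
    hjValue l = (n : ℚ) / q ∧ n ∣ (q + 1) ^ 2

/-- A string is *Du Val* if all its entries equal `2`. -/
def IsDuVal (l : List ℤ) : Prop := ∀ x ∈ l, x = 2

/-!
With `M(a) = !![a, -1; 1, 0]`, the first column `(n, q)` of `M(c₁) ⋯ M(c_r)` gives the value
`n/q` of a string in lowest terms (the product has determinant 1). Reversing the string
transposes the product up to conjugation by `diag(1, -1)`, so the reversed string has value
`n/q'` with `q q' ≡ 1 (mod n)`. A first entry 2 means `q > n/2` and a last entry 2 means
`q' > n/2`. Multiplying `n ∣ (q + 1)²` by `q'` gives `n ∣ q + q' + 2`, and `n < q + q' + 2 ≤ 2n`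
then forces `q = n - 1`, the value of `[2, …, 2]`.
-/

open Matrix

def hjMat (a : ℤ) : Matrix (Fin 2) (Fin 2) ℤ := !![a, -1; 1, 0]

def hjMatrix (l : List ℤ) : Matrix (Fin 2) (Fin 2) ℤ := (l.map hjMat).prod

@[simp] lemma hjMatrix_nil : hjMatrix [] = 1 := rfl

lemma hjMatrix_cons (a : ℤ) (l : List ℤ) : hjMatrix (a :: l) = hjMat a * hjMatrix l := rfl

@[simp] lemma hjMatrix_cons_zero_zero (a : ℤ) (l : List ℤ) :
    hjMatrix (a :: l) 0 0 = a * hjMatrix l 0 0 - hjMatrix l 1 0 := by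
  simp [hjMatrix_cons, hjMat, mul_apply, Fin.sum_univ_two, sub_eq_add_neg]

@[simp] lemma hjMatrix_cons_one_zero (a : ℤ) (l : List ℤ) :
    hjMatrix (a :: l) 1 0 = hjMatrix l 0 0 := by
  simp [hjMatrix_cons, hjMat, mul_apply, Fin.sum_univ_two]

lemma det_hjMatrix (l : List ℤ) : (hjMatrix l).det = 1 := by
  induction l with
  | nil => simp
  | cons a l ih => rw [hjMatrix_cons, det_mul, ih]; simp [hjMat]

lemma hjMatrix_reverse (l : List ℤ) :
    hjMatrix l.reverse = !![1, 0; 0, -1] * (hjMatrix l)ᵀ * !![1, 0; 0, -1] := by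
  set S : Matrix (Fin 2) (Fin 2) ℤ := !![1, 0; 0, -1]
  have hS : S * S = 1 := by
    ext i j; fin_cases i <;> fin_cases j <;> simp [S]
  have hmat (a : ℤ) : hjMat a = S * (hjMat a)ᵀ * S := by
    ext i j; fin_cases i <;> fin_cases j <;>
      simp [S, hjMat, mul_apply, vecMul, dotProduct, Fin.sum_univ_two]
  induction l with
  | nil => simp [hS]
  | cons a l ih =>
    calc hjMatrix (a :: l).reverse = hjMatrix l.reverse * hjMat a := by
          simp [hjMatrix]
      _ = S * (hjMatrix l)ᵀ * S * (S * (hjMat a)ᵀ * S) := by rw [ih, ← hmat]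
      _ = S * ((hjMatrix l)ᵀ * (hjMat a)ᵀ) * S := by
          simp only [Matrix.mul_assoc, ← Matrix.mul_assoc S S, hS, Matrix.one_mul]
      _ = S * (hjMatrix (a :: l))ᵀ * S := by rw [hjMatrix_cons, transpose_mul]

lemma hjMatrix_reverse_zero_zero (l : List ℤ) : hjMatrix l.reverse 0 0 = hjMatrix l 0 0 := by
  simp [hjMatrix_reverse, mul_apply, vecMul, dotProduct, Fin.sum_univ_two]

lemma hjMatrix_reverse_one_zero (l : List ℤ) : hjMatrix l.reverse 1 0 = -hjMatrix l 0 1 := by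
  simp [hjMatrix_reverse, mul_apply, vecMul, dotProduct, Fin.sum_univ_two]

lemma hjMatrix_zero_zero_dvd (l : List ℤ) :
    hjMatrix l 0 0 ∣ hjMatrix l 1 0 * hjMatrix l.reverse 1 0 - 1 := by
  have hdet := det_hjMatrix l
  rw [det_fin_two] at hdet
  exact ⟨-hjMatrix l 1 1, by rw [hjMatrix_reverse_one_zero]; linear_combination hdet⟩

lemma isCoprime_hjMatrix (l : List ℤ) : IsCoprime (hjMatrix l 0 0) (hjMatrix l 1 0) := by
  have hdet := det_hjMatrix l
  rw [det_fin_two] at hdet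
  exact ⟨hjMatrix l 1 1, -hjMatrix l 0 1, by linear_combination hdet⟩

lemma hjMatrix_one_zero_nonneg_lt {l : List ℤ} (hl : ∀ x ∈ l, 2 ≤ x) :
    0 ≤ hjMatrix l 1 0 ∧ hjMatrix l 1 0 < hjMatrix l 0 0 := by
  induction l with
  | nil => simp
  | cons a l ih =>
    obtain ⟨ha, hl'⟩ := List.forall_mem_cons.1 hl
    obtain ⟨h₀, h₁⟩ := ih hl'
    simp only [hjMatrix_cons_zero_zero, hjMatrix_cons_one_zero]
    constructor <;> nlinarith

lemma hjValue_eq_div {l : List ℤ} (hl : ∀ x ∈ l, 2 ≤ x) :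
    hjValue l = (hjMatrix l 0 0 : ℚ) / hjMatrix l 1 0 := by
  induction l with
  | nil => simp [hjValue]
  | cons a l ih =>
    have hl' := (List.forall_mem_cons.1 hl).2
    have hpos : (hjMatrix l 0 0 : ℚ) ≠ 0 := by
      have := hjMatrix_one_zero_nonneg_lt hl'
      exact_mod_cast (by omega : hjMatrix l 0 0 ≠ 0)
    rw [hjValue, ih hl', hjMatrix_cons_zero_zero, hjMatrix_cons_one_zero]
    push_cast
    field_simp

lemma isDuVal_of_hjMatrix_zero_zero_eq {l : List ℤ} (hl : ∀ x ∈ l, 2 ≤ x)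
    (h : hjMatrix l 0 0 = hjMatrix l 1 0 + 1) : IsDuVal l := by
  induction l with
  | nil => simp [IsDuVal]
  | cons a l ih =>
    obtain ⟨ha, hl'⟩ := List.forall_mem_cons.1 hl
    obtain ⟨h₀, h₁⟩ := hjMatrix_one_zero_nonneg_lt hl'
    simp only [hjMatrix_cons_zero_zero, hjMatrix_cons_one_zero] at h
    obtain rfl : a = 2 := by nlinarith
    exact List.forall_mem_cons.2 ⟨rfl, ih hl' (by linarith)⟩

lemma hjMatrix_zero_zero_lt_two_mul {l : List ℤ} (hl : ∀ x ∈ l, 2 ≤ x) (hlen : 2 ≤ l.length)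
    (hhead : l.headI = 2) : hjMatrix l 0 0 < 2 * hjMatrix l 1 0 := by
  match l, hlen with
  | a :: b :: t, _ =>
    obtain rfl : a = 2 := hhead
    have := hjMatrix_one_zero_nonneg_lt (l := t) fun x hx => hl x (by simp [hx])
    simp only [hjMatrix_cons_zero_zero, hjMatrix_cons_one_zero]
    linarith

theorem eq_sub_one_of_dvd_sq_add_one {n q q' : ℤ} (hq : n < 2 * q) (hq' : n < 2 * q')
    (hqn : q < n) (hq'n : q' < n) (hsq : n ∣ (q + 1) ^ 2) (hinv : n ∣ q * q' - 1) :
    q = n - 1 := by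
  have hsum : n ∣ q + q' + 2 := by
    have := (hsq.mul_left q').sub (hinv.mul_left (q + 2))
    rwa [show q' * (q + 1) ^ 2 - (q + 2) * (q * q' - 1) = q + q' + 2 by ring] at this
  obtain ⟨k, hk⟩ := hsum
  have hk2 : k = 2 := by
    have h1 : 1 < k := by nlinarith
    have h2 : k ≤ 2 := by nlinarith
    omega
  subst hk2
  omega

lemma List.headI_reverse {α : Type*} [Inhabited α] (l : List α) :
    l.reverse.headI = l.getLastI := by
  rw [List.getLastI_eq_getLast?_getD, ← List.head?_reverse]
  cases l.reverse <;> rfl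

lemma IsString.reverse {l : List ℤ} (h : IsString l) : IsString l.reverse := by
  simpa [IsString] using h

lemma IsString.two_le_headI {l : List ℤ} (h : IsString l) : 2 ≤ l.headI := by
  obtain ⟨hne, hl⟩ := h
  cases l with
  | nil => contradiction
  | cons a l => exact hl a List.mem_cons_self

lemma IsString.two_le_getLastI {l : List ℤ} (h : IsString l) : 2 ≤ l.getLastI := by
  simpa [List.headI_reverse] using h.reverse.two_le_headI

theorem IsTString.isDuVal_of_headI_eq_two_of_getLastI_eq_two {c : List ℤ} (h : IsTString c)
    (hhead : c.headI = 2) (hlast : c.getLastI = 2) : IsDuVal c := by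
  obtain ⟨⟨hne, hc⟩, n, q, hq₁, hqn, hcop, hval, hdvd⟩ := h
  rcases Nat.lt_or_ge c.length 2 with hlen | hlen
  · obtain ⟨a, rfl⟩ : ∃ a, c = [a] :=
      List.length_eq_one_iff.mp (by have := List.length_pos_of_ne_nil hne; omega)
    simpa [IsDuVal] using hhead
  have hrev : ∀ x ∈ c.reverse, 2 ≤ x := by simpa using hc
  have hlt := (hjMatrix_one_zero_nonneg_lt hc).2
  have hlt' := (hjMatrix_one_zero_nonneg_lt hrev).2
  have hhalf := hjMatrix_zero_zero_lt_two_mul hc hlen hhead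
  have hhalf' := hjMatrix_zero_zero_lt_two_mul hrev (by simpa) (by rwa [List.headI_reverse])
  rw [hjMatrix_reverse_zero_zero] at hlt' hhalf'
  obtain ⟨hn, hq⟩ := Rat.div_int_inj (a := n) (b := q) (by omega) (by omega) (by simpa)
      (Int.isCoprime_iff_gcd_eq_one.mp (isCoprime_hjMatrix c))
      (by rw [← hjValue_eq_div hc, hval]; push_cast; rfl)
  apply isDuVal_of_hjMatrix_zero_zero_eq hc
  have := eq_sub_one_of_dvd_sq_add_one hhalf hhalf' hlt hlt'
    (by rw [← hn, ← hq]; exact_mod_cast hdvd) (hjMatrix_zero_zero_dvd c)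
  omega

/-- Every string `[c₁,…,c_n]` of type T that is not Du Val satisfies
`c₁ * c_n ≥ 6`. -/
theorem tString_head_mul_getLast (c : List ℤ) (h : IsTString c)
    (hnd : ¬ IsDuVal c) : 6 ≤ c.headI * c.getLastI := by
  have h₁ := h.1.two_le_headI
  have h₂ := h.1.two_le_getLastI
  by_contra hlt
  exact hnd (h.isDuVal_of_headI_eq_two_of_getLastI_eq_two (by nlinarith) (by nlinarith))
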